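/- If the series of mass inputs converges, i.e. lim_{τ→∞} Σ_{t=1}^{τ} x(t) = m_x^∞ exists (in ℝ), then the series of mass effluxes Σ_{t=1}^{∞} m_h(t) converges, and consequently the sequence of stored masses m_c(τ) converges as τ → ∞. -/

import Mathlib

/-!
Mass is conserved: since `R(t)` is left-stochastic, `i(t)` sums to one and the output gate
splits `m_tot(t)` into `c(t)` and `h(t)`, one has `m_c(t) + m_h(t) = m_c(t-1) + x(t)`, and
telescoping gives `m_c(τ) + Σ_{t ≤ τ} m_h(t) = m_c(0) + Σ_{t ≤ τ} x(t)`. All quantities stay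
nonnegative, so the efflux partial sums are monotone and bounded by `m_c(0) + sup_τ Σ_{t ≤ τ} x(t)`,
hence convergent, and then `m_c(τ)` converges as a difference of convergent sequences.
-/

open Filter Finset Matrix Topology

section MassBalance

variable {C e x : ℕ → ℝ}

theorem add_sum_Icc_eq_of_balance (hbal : ∀ t, C (t + 1) + e (t + 1) = C t + x (t + 1))
    (τ : ℕ) : C τ + ∑ t ∈ Icc 1 τ, e t = C 0 + ∑ t ∈ Icc 1 τ, x t := by
  induction τ with
  | zero => simp
  | succ n ih =>
    rw [sum_Icc_succ_top (Nat.le_add_left 1 n), sum_Icc_succ_top (Nat.le_add_left 1 n)]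
    linarith [hbal n]

theorem monotone_sum_Icc_of_nonneg (he : ∀ t, 1 ≤ t → 0 ≤ e t) :
    Monotone fun τ => ∑ t ∈ Icc 1 τ, e t :=
  monotone_nat_of_le_succ fun n => by
    rw [sum_Icc_succ_top (Nat.le_add_left 1 n)]
    exact le_add_of_nonneg_right (he _ (Nat.le_add_left 1 n))

theorem tendsto_of_balance (hC : ∀ t, 0 ≤ C t) (he : ∀ t, 1 ≤ t → 0 ≤ e t)
    (hbal : ∀ t, C (t + 1) + e (t + 1) = C t + x (t + 1)) {mx : ℝ}
    (hx : Tendsto (fun τ => ∑ t ∈ Icc 1 τ, x t) atTop (𝓝 mx)) :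
    (∃ S, Tendsto (fun τ => ∑ t ∈ Icc 1 τ, e t) atTop (𝓝 S)) ∧ ∃ L, Tendsto C atTop (𝓝 L) := by
  have hid := add_sum_Icc_eq_of_balance hbal
  obtain ⟨B, hB⟩ := hx.bddAbove_range
  have hbdd : BddAbove (Set.range fun τ => ∑ t ∈ Icc 1 τ, e t) := by
    refine ⟨C 0 + B, ?_⟩
    rintro _ ⟨τ, rfl⟩
    linarith [hid τ, hC τ, hB ⟨τ, rfl⟩]
  have he_lim := tendsto_atTop_ciSup (monotone_sum_Icc_of_nonneg he) hbdd
  have hC_eq : ∀ τ, C 0 + ∑ t ∈ Icc 1 τ, x t - ∑ t ∈ Icc 1 τ, e t = C τ := fun τ => by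
    linarith [hid τ]
  exact ⟨⟨_, he_lim⟩, _, ((tendsto_const_nhds.add hx).sub he_lim).congr hC_eq⟩

end MassBalance

section Cell

variable {ι : Type*} [Fintype ι]

theorem sum_one_sub_mul_add_sum_mul (o m : ι → ℝ) :
    ∑ k, (1 - o k) * m k + ∑ k, o k * m k = ∑ k, m k := by
  rw [← sum_add_distrib]
  exact sum_congr rfl fun k _ => by ring

variable [DecidableEq ι] {M : Matrix ι ι ℝ}

theorem mulVec_add_smul_nonneg (hM : M ∈ colStochastic ℝ ι) {c i : ι → ℝ} {a : ℝ}
    (hc : ∀ k, 0 ≤ c k) (ha : 0 ≤ a) (hi : ∀ k, 0 ≤ i k) (k : ι) :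
    0 ≤ (M *ᵥ c + a • i) k :=
  add_nonneg (nonneg_mulVec_of_mem_colStochastic hM hc k) (mul_nonneg ha (hi k))

theorem sum_mulVec_add_smul (hM : M ∈ colStochastic ℝ ι) (c : ι → ℝ) {i : ι → ℝ}
    (hi : ∑ k, i k = 1) (a : ℝ) : ∑ k, (M *ᵥ c + a • i) k = ∑ k, c k + a := by
  simp only [Pi.add_apply, Pi.smul_apply, smul_eq_mul, sum_add_distrib, ← mul_sum, hi,
    sum_mulVec_of_mem_colStochastic hM, mul_one]

end Cell

/-- **Convergence:** if the series of mass inputs converges, then the series of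
mass effluxes converges, and the sequence of stored masses m_c(τ) converges. -/
theorem mclstm_convergence
    (K : ℕ)
    (x : ℕ → ℝ) (hx : ∀ t, 1 ≤ t → 0 ≤ x t)
    (i : ℕ → Fin K → ℝ)
    (hi_nonneg : ∀ t k, 1 ≤ t → 0 ≤ i t k)
    (hi_sum : ∀ t, 1 ≤ t → ∑ k, i t k = 1)
    (o : ℕ → Fin K → ℝ)
    (ho : ∀ t k, 1 ≤ t → o t k ∈ Set.Icc (0 : ℝ) 1)
    (R : ℕ → Matrix (Fin K) (Fin K) ℝ)
    (hR_nonneg : ∀ t k j, 1 ≤ t → 0 ≤ R t k j)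
    (hR_col : ∀ t j, 1 ≤ t → ∑ k, R t k j = 1)
    (c mtot h : ℕ → Fin K → ℝ)
    (hc0 : ∀ k, 0 ≤ c 0 k)
    (hmtot : ∀ t, 1 ≤ t → mtot t = (R t).mulVec (c (t - 1)) + x t • i t)
    (hc : ∀ t, 1 ≤ t → c t = fun k => (1 - o t k) * mtot t k)
    (hh : ∀ t, 1 ≤ t → h t = fun k => o t k * mtot t k)
    (mx : ℝ)
    (hconv : Filter.Tendsto (fun τ => ∑ t ∈ Finset.Icc 1 τ, x t) Filter.atTop (nhds mx)) :
    (∃ S : ℝ, Filter.Tendsto (fun τ => ∑ t ∈ Finset.Icc 1 τ, ∑ k, h t k)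
        Filter.atTop (nhds S)) ∧
    (∃ L : ℝ, Filter.Tendsto (fun τ => ∑ k, c τ k) Filter.atTop (nhds L)) := by
  have hR : ∀ t, 1 ≤ t → R t ∈ colStochastic ℝ (Fin K) := fun t ht =>
    mem_colStochastic_iff_sum.2 ⟨fun k j => hR_nonneg t k j ht, fun j => hR_col t j ht⟩
  have hmtot_nonneg : ∀ t, 1 ≤ t → (∀ k, 0 ≤ c (t - 1) k) → ∀ k, 0 ≤ mtot t k :=
    fun t ht hc' k => hmtot t ht ▸
      mulVec_add_smul_nonneg (hR t ht) hc' (hx t ht) (fun k => hi_nonneg t k ht) k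
  have hc_nonneg : ∀ τ k, 0 ≤ c τ k := by
    intro τ
    induction τ with
    | zero => exact hc0
    | succ n ih =>
      intro k
      rw [hc _ n.succ_pos]
      exact mul_nonneg (sub_nonneg.2 (ho _ k n.succ_pos).2) (hmtot_nonneg _ n.succ_pos ih k)
  refine tendsto_of_balance (fun τ => sum_nonneg fun k _ => hc_nonneg τ k) (fun t ht => ?_)
    (fun t => ?_) hconv
  · rw [hh t ht]
    exact sum_nonneg fun k _ =>
      mul_nonneg (ho t k ht).1 (hmtot_nonneg t ht (hc_nonneg _) k)
  · rw [hc _ t.succ_pos, hh _ t.succ_pos, sum_one_sub_mul_add_sum_mul, hmtot _ t.succ_pos,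
      sum_mulVec_add_smul (hR _ t.succ_pos) _ (hi_sum _ t.succ_pos), Nat.succ_sub_one]
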